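/- arXiv:2507.03418 — 2 statements merged into one kernel-verified Lean document; each statement's English description precedes it below -/
import Mathlib

section
/- Let V = C^2 ⊗ C^2 ⊗ C^2, where each C^2 has basis {x,y}, symplectic form η with η(x,y)=1, η(x,x)=η(y,y)=0, and let φ : S^2(C^2) → sl_2 be the isomorphism x^2 ↦ X, xy ↦ -H/2, y^2 ↦ -Y (where X,H,Y is the standard sl_2 basis). For scalars s1,s2,s3 define the bracket [v1⊗v2⊗v3, w1⊗w2⊗w3] = s1·φ(v1w1)·η(v2,w2)·η(v3,w3) + s2·η(v1,w1)·φ(v2w2)·η(v3,w3) + s3·η(v1,w1)·η(v2,w2)·φ(v3w3) ∈ sl_2 ⊕ sl_2 ⊕ sl_2, with sl_2⊕sl_2⊕sl_2 acting on V factorwise. Then for u = x⊗x⊗x and w = y⊗y⊗y one has [u,w] = -(1/2)(s1·H1 + s2·H2 + s3·H3), the action of [u,w] on u equals -(1/2)(s1+s2+s3)·u, and consequently the graded Jacobi identity for the triple (u,u,w) holds if and only if s1+s2+s3 = 0. -/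
/-!
The bracket of u = x⊗x⊗x with w = y⊗y⊗y lies in the Cartan subalgebra spanned by H₁, H₂, H₃,
and u is a weight vector of weight (1,1,1) for it, so [u,w] acts on u by the scalar
-(s1+s2+s3)/2. That [u,u] = 0 comes from η(x,x) = 0.
-/

namespace Stmt0

noncomputable section

open Matrix

abbrev M2 := Matrix (Fin 2) (Fin 2) ℂ

/-- standard sl₂ basis -/
def Xm : M2 := !![0, 1; 0, 0]
def Hm : M2 := !![1, 0; 0, -1]
def Ym : M2 := !![0, 0; 1, 0]

/-- The symplectic form on the basis {x = 0, y = 1} of ℂ², normalized by η(x,y)=1. -/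
def eta : Fin 2 → Fin 2 → ℂ := fun i j =>
  if i = 0 ∧ j = 1 then 1 else if i = 1 ∧ j = 0 then -1 else 0

/-- The isomorphism φ : S²ℂ² → sl₂ on basis products: φ(x²)=X, φ(xy)=-H/2, φ(y²)=-Y. -/
def phi : Fin 2 → Fin 2 → M2 := fun i j =>
  if i = 0 ∧ j = 0 then Xm
  else if i = 1 ∧ j = 1 then -Ym
  else (-(1/2) : ℂ) • Hm

/-- The odd-odd bracket on pure tensors, with values in sl₂ ⊕ sl₂ ⊕ sl₂. -/
def br (s1 s2 s3 : ℂ) (v w : Fin 2 × Fin 2 × Fin 2) : M2 × M2 × M2 :=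
  ( (s1 * eta v.2.1 w.2.1 * eta v.2.2 w.2.2) • phi v.1 w.1,
    (s2 * eta v.1 w.1 * eta v.2.2 w.2.2) • phi v.2.1 w.2.1,
    (s3 * eta v.1 w.1 * eta v.2.1 w.2.1) • phi v.2.2 w.2.2 )

/-- V = ℂ²⊗ℂ²⊗ℂ² realized as functions on basis triples. -/
abbrev V := Fin 2 → Fin 2 → Fin 2 → ℂ

/-- The factorwise action of sl₂ ⊕ sl₂ ⊕ sl₂ on V. -/
def act (A : M2 × M2 × M2) (f : V) : V := fun i j k =>
  (∑ i', A.1 i i' * f i' j k) + (∑ j', A.2.1 j j' * f i j' k) + (∑ k', A.2.2 k k' * f i j k')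

/-- basis vector of V corresponding to a pure tensor of basis vectors -/
def delta (v : Fin 2 × Fin 2 × Fin 2) : V := fun i j k =>
  if i = v.1 ∧ j = v.2.1 ∧ k = v.2.2 then 1 else 0

def hWeight : Fin 2 → ℂ := ![1, -1]

lemma eta_self (i : Fin 2) : eta i i = 0 := by
  fin_cases i <;> simp [eta]

lemma Hm_apply (i i' : Fin 2) : Hm i i' = if i = i' then hWeight i else 0 := by
  fin_cases i <;> fin_cases i' <;> simp [Hm, hWeight]

lemma br_self (s1 s2 s3 : ℂ) (v : Fin 2 × Fin 2 × Fin 2) : br s1 s2 s3 v v = 0 := by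
  simp [br, eta_self]

lemma br_xxx_yyy (s1 s2 s3 : ℂ) :
    br s1 s2 s3 (0,0,0) (1,1,1)
      = ((-(1/2) * s1) • Hm, (-(1/2) * s2) • Hm, (-(1/2) * s3) • Hm) := by
  simp [br, eta, phi, smul_smul, mul_comm]

lemma act_cartan_delta (a b c : ℂ) (v : Fin 2 × Fin 2 × Fin 2) :
    act (a • Hm, b • Hm, c • Hm) (delta v)
      = (a * hWeight v.1 + b * hWeight v.2.1 + c * hWeight v.2.2) • delta v := by
  funext i j k
  obtain ⟨p, q, r⟩ := v
  by_cases hi : i = p <;> by_cases hj : j = q <;> by_cases hk : k = r <;>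
    simp [act, delta, Hm_apply, hi, hj, hk]

lemma delta_ne_zero (v : Fin 2 × Fin 2 × Fin 2) : delta v ≠ 0 := fun h => by
  simpa [delta] using congrFun (congrFun (congrFun h v.1) v.2.1) v.2.2

/-- For u = x⊗x⊗x and w = y⊗y⊗y:
 [u,w] = -(1/2)(s1·H₁ + s2·H₂ + s3·H₃), the action of [u,w] on u is
 -(1/2)(s1+s2+s3)·u, and (since [u,u]=0) the graded Jacobi identity for (u,u,w),
 i.e. [[u,w],u] = 0, holds iff s1+s2+s3 = 0. -/
theorem stmt0 (s1 s2 s3 : ℂ) :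
    br s1 s2 s3 (0,0,0) (1,1,1)
        = ((-(1/2) * s1) • Hm, (-(1/2) * s2) • Hm, (-(1/2) * s3) • Hm)
    ∧ act (br s1 s2 s3 (0,0,0) (1,1,1)) (delta (0,0,0))
        = (-(1/2) * (s1 + s2 + s3)) • delta (0,0,0)
    ∧ br s1 s2 s3 (0,0,0) (0,0,0) = 0
    ∧ (act (br s1 s2 s3 (0,0,0) (1,1,1)) (delta (0,0,0)) = 0 ↔ s1 + s2 + s3 = 0) := by
  have h_act : act (br s1 s2 s3 (0,0,0) (1,1,1)) (delta (0,0,0))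
      = (-(1/2) * (s1 + s2 + s3)) • delta (0,0,0) := by
    rw [br_xxx_yyy, act_cartan_delta]
    congr 1
    simp only [hWeight, Matrix.cons_val_zero]
    ring
  refine ⟨br_xxx_yyy s1 s2 s3, h_act, br_self s1 s2 s3 _, ?_⟩
  rw [h_act, smul_eq_zero, or_iff_left (delta_ne_zero _)]
  simp

end

end Stmt0
end

section
/- Let s1, s2, s3 ∈ C be nonzero with s1+s2+s3 = 0, and let m be the graded Lie superalgebra of the p_123^IV grading of D(2,1;a): m = g_{-1}⊕g_{-2}⊕g_{-3} with odd e1,e2,e3 spanning g_{-1}, even e4,e5,e6 spanning g_{-2}, odd e7 spanning g_{-3}, and nonzero brackets [e1,e2]=s3·e6, [e1,e3]=s2·e5, [e2,e3]=s1·e4, [e1,e4]=-e7, [e2,e5]=-e7, [e3,e6]=-e7. Then the space of grading-preserving even superderivations D of m (i.e. linear maps with D(g_{-k}) ⊆ g_{-k} satisfying D[x,y] = [Dx,y] + [x,Dy]) is exactly 3-dimensional, consisting of the maps with D(e1)=λ1·e1, D(e2)=λ2·e2, D(e3)=λ3·e3, D(e4)=(λ2+λ3)·e4, D(e5)=(λ1+λ3)·e5,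 D(e6)=(λ1+λ2)·e6, D(e7)=(λ1+λ2+λ3)·e7 for arbitrary λ1,λ2,λ3 ∈ C. -/
/-!
A grading-preserving derivation is determined by its restriction to the generating part
g₋₁ = ⟨e1, e2, e3⟩. Each e_a there is odd with [e_a, e_a] = 0, so the Leibniz rule gives
[D e_a, e_a] + [e_a, D e_a] = 0; the components of this along e4, e5, e6 are 2 s_c times the
off-diagonal entries of D e_a, which therefore vanish. Every other basis vector is a nonzero
multiple of a bracket of two eigenvectors of D, hence an eigenvector whose eigenvalue is the sum
of theirs.
-/

namespace Stmt16

noncomputable section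

abbrev W := Fin 7 → ℂ

def eV (k : Fin 7) : W := fun l => if l = k then 1 else 0

/-- depth of basis vectors: e1,e2,e3 ∈ g₋₁, e4,e5,e6 ∈ g₋₂, e7 ∈ g₋₃ -/
def grade : Fin 7 → ℕ := ![1, 1, 1, 2, 2, 2, 3]

/-- structure constants of m, with super-symmetric mirror entries -/
def sc (s1 s2 s3 : ℂ) : Fin 7 → Fin 7 → W := fun i j =>
  match i.val, j.val with
  | 0, 1 => s3 • eV 5
  | 1, 0 => s3 • eV 5
  | 0, 2 => s2 • eV 4
  | 2, 0 => s2 • eV 4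
  | 1, 2 => s1 • eV 3
  | 2, 1 => s1 • eV 3
  | 0, 3 => -eV 6
  | 3, 0 => eV 6
  | 1, 4 => -eV 6
  | 4, 1 => eV 6
  | 2, 5 => -eV 6
  | 5, 2 => eV 6
  | _, _ => 0

def brV (s1 s2 s3 : ℂ) (u v : W) : W :=
  ∑ i, ∑ j, (u i * v j) • sc s1 s2 s3 i j

section Derivation

variable {K M : Type*} [Field K] [AddCommGroup M] [Module K M]
  (B : M →ₗ[K] M →ₗ[K] M) {D : M →ₗ[K] M}

theorem apply_bracket_eq_add_smul_of_eigen (hD : ∀ x y, D (B x y) = B (D x) y + B x (D y))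
    {u v : M} {a b : K} (hu : D u = a • u) (hv : D v = b • v) :
    D (B u v) = (a + b) • B u v := by
  rw [hD, hu, hv, LinearMap.map_smul₂, map_smul, add_smul]

theorem apply_eq_add_smul_of_bracket_eq_smul (hD : ∀ x y, D (B x y) = B (D x) y + B x (D y))
    {u v w : M} {a b c : K} (hu : D u = a • u) (hv : D v = b • v) (hc : c ≠ 0)
    (hw : B u v = c • w) : D w = (a + b) • w := by
  have h := apply_bracket_eq_add_smul_of_eigen B hD hu hv
  rw [hw, map_smul, smul_comm] at h
  exact smul_right_injective M hc h

end Derivation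

variable {s1 s2 s3 : ℂ}

theorem brV_eq (u v : W) : brV s1 s2 s3 u v =
    ![0, 0, 0, s1 * (u 1 * v 2 + u 2 * v 1), s2 * (u 0 * v 2 + u 2 * v 0),
      s3 * (u 0 * v 1 + u 1 * v 0),
      u 3 * v 0 - u 0 * v 3 + u 4 * v 1 - u 1 * v 4 + u 5 * v 2 - u 2 * v 5] := by
  unfold brV
  simp [Fin.sum_univ_seven, sc]
  funext k
  fin_cases k <;> simp [eV] <;> ring

variable (s1 s2 s3) in
def brL : W →ₗ[ℂ] W →ₗ[ℂ] W :=
  LinearMap.mk₂ ℂ (brV s1 s2 s3)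
    (fun u u' v => by ext k; fin_cases k <;> simp [brV_eq] <;> ring)
    (fun c u v => by ext k; fin_cases k <;> simp [brV_eq] <;> ring)
    (fun u v v' => by ext k; fin_cases k <;> simp [brV_eq] <;> ring)
    (fun c u v => by ext k; fin_cases k <;> simp [brV_eq] <;> ring)

theorem brV_eV_one_two : brV s1 s2 s3 (eV 1) (eV 2) = s1 • eV 3 := by
  ext k; fin_cases k <;> simp [brV_eq, eV]

theorem brV_eV_zero_two : brV s1 s2 s3 (eV 0) (eV 2) = s2 • eV 4 := by
  ext k; fin_cases k <;> simp [brV_eq, eV]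

theorem brV_eV_zero_one : brV s1 s2 s3 (eV 0) (eV 1) = s3 • eV 5 := by
  ext k; fin_cases k <;> simp [brV_eq, eV]

theorem brV_eV_three_zero : brV s1 s2 s3 (eV 3) (eV 0) = eV 6 := by
  ext k; fin_cases k <;> simp [brV_eq, eV]

theorem brV_eV_self_of_grade_eq_one {a : Fin 7} (ha : grade a = 1) :
    brV s1 s2 s3 (eV a) (eV a) = 0 := by
  fin_cases a <;> simp [grade] at ha <;> ext k <;> fin_cases k <;> simp [brV_eq, eV]

theorem eq_smul_eV_of_anticomm_eq_zero (hs1 : s1 ≠ 0) (hs2 : s2 ≠ 0) (hs3 : s3 ≠ 0)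
    {a : Fin 7} (ha : grade a = 1) {u : W} (hu : ∀ k, grade k ≠ 1 → u k = 0)
    (h : brV s1 s2 s3 u (eV a) + brV s1 s2 s3 (eV a) u = 0) : u = u a • eV a := by
  have h3 := congrFun h 3
  have h4 := congrFun h 4
  have h5 := congrFun h 5
  ext k
  by_cases hk : grade k = 1
  · fin_cases a <;> fin_cases k <;> simp [grade] at ha hk <;> simp_all [brV_eq, eV]
  · have hka : k ≠ a := by rintro rfl; exact hk ha
    simp [hu k hk, eV, hka]

def weight (l1 l2 l3 : ℂ) : Fin 7 → ℂ :=
  ![l1, l2, l3, l2 + l3, l1 + l3, l1 + l2, l1 + l2 + l3]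

theorem apply_eq_mul_of_apply_eV {D : W →ₗ[ℂ] W} {μ : Fin 7 → ℂ}
    (h : ∀ k, D (eV k) = μ k • eV k) (z : W) : D z = fun k => μ k * z k := by
  have hz : z = ∑ k, z k • eV k := by
    ext l; simp [eV]
  rw [hz, map_sum]
  ext l
  simp [h, eV, mul_comm]

theorem brV_weight_mul (l1 l2 l3 : ℂ) (x y : W) :
    (fun k => weight l1 l2 l3 k * brV s1 s2 s3 x y k) =
      brV s1 s2 s3 (fun k => weight l1 l2 l3 k * x k) y
        + brV s1 s2 s3 x (fun k => weight l1 l2 l3 k * y k) := by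
  ext k; fin_cases k <;> simp [brV_eq, weight] <;> ring

theorem stmt16_general (s1 s2 s3 : ℂ) (h1 : s1 ≠ 0) (h2 : s2 ≠ 0) (h3 : s3 ≠ 0)
    (D : W →ₗ[ℂ] W) :
    ((∀ i j : Fin 7, grade i ≠ grade j → D (eV i) j = 0)
      ∧ (∀ x y : W, D (brV s1 s2 s3 x y)
            = brV s1 s2 s3 (D x) y + brV s1 s2 s3 x (D y)))
    ↔ ∃ l1 l2 l3 : ℂ,
        D (eV 0) = l1 • eV 0 ∧ D (eV 1) = l2 • eV 1 ∧ D (eV 2) = l3 • eV 2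
        ∧ D (eV 3) = (l2 + l3) • eV 3 ∧ D (eV 4) = (l1 + l3) • eV 4
        ∧ D (eV 5) = (l1 + l2) • eV 5 ∧ D (eV 6) = (l1 + l2 + l3) • eV 6 := by
  constructor
  · rintro ⟨hg, hd⟩
    have diag (a : Fin 7) (ha : grade a = 1) : D (eV a) = D (eV a) a • eV a :=
      eq_smul_eV_of_anticomm_eq_zero h1 h2 h3 ha (fun k hk => hg a k (ha ▸ Ne.symm hk))
        (by rw [← hd, brV_eV_self_of_grade_eq_one ha, map_zero])
    have e0 := diag 0 rfl
    have e1 := diag 1 rfl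
    have e2 := diag 2 rfl
    have e3 := apply_eq_add_smul_of_bracket_eq_smul (brL s1 s2 s3) hd e1 e2 h1 brV_eV_one_two
    refine ⟨_, _, _, e0, e1, e2, e3,
      apply_eq_add_smul_of_bracket_eq_smul (brL s1 s2 s3) hd e0 e2 h2 brV_eV_zero_two,
      apply_eq_add_smul_of_bracket_eq_smul (brL s1 s2 s3) hd e0 e1 h3 brV_eV_zero_one, ?_⟩
    rw [add_assoc, add_comm]
    exact apply_eq_add_smul_of_bracket_eq_smul (brL s1 s2 s3) hd e3 e0 one_ne_zero
      (brV_eV_three_zero.trans (one_smul ℂ _).symm)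
  · rintro ⟨l1, l2, l3, hv0, hv1, hv2, hv3, hv4, hv5, hv6⟩
    have hD := apply_eq_mul_of_apply_eV (μ := weight l1 l2 l3) (D := D) (fun k => by
      fin_cases k <;> assumption)
    refine ⟨fun i j hij => ?_, fun x y => by simp only [hD]; exact brV_weight_mul l1 l2 l3 x y⟩
    have hji : j ≠ i := fun h => hij (h ▸ rfl)
    simp [hD, eV, hji]

theorem stmt16 (s1 s2 s3 : ℂ) (h1 : s1 ≠ 0) (h2 : s2 ≠ 0) (h3 : s3 ≠ 0)
    (hsum : s1 + s2 + s3 = 0) (D : W →ₗ[ℂ] W) :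
    ((∀ i j : Fin 7, grade i ≠ grade j → D (eV i) j = 0)
      ∧ (∀ x y : W, D (brV s1 s2 s3 x y)
            = brV s1 s2 s3 (D x) y + brV s1 s2 s3 x (D y)))
    ↔ ∃ l1 l2 l3 : ℂ,
        D (eV 0) = l1 • eV 0 ∧ D (eV 1) = l2 • eV 1 ∧ D (eV 2) = l3 • eV 2
        ∧ D (eV 3) = (l2 + l3) • eV 3 ∧ D (eV 4) = (l1 + l3) • eV 4
        ∧ D (eV 5) = (l1 + l2) • eV 5 ∧ D (eV 6) = (l1 + l2 + l3) • eV 6 :=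
  stmt16_general s1 s2 s3 h1 h2 h3 D

end

end Stmt16
end
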